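/- Let N⁺ = {((1, s; 0, 1), 0) : s ∈ ℝ} ⊆ G and set x_n = (I, (0, n)) ∈ G for n ∈ ℕ. Then the conjugates x_n N⁺ x_n⁻¹ converge in the Chabauty sense to the closed subgroup V₀ = {(I, (t, 0)) : t ∈ ℝ}. -/

import Mathlib

/-!
Conjugating by the translation `(I, (0, r))` sends `((1,s;0,1), 0)` to `((1,s;0,1), (-s r, 0))`.
Every `(I, (t, 0))` is therefore the limit of the conjugates with `s = -t / r → 0`. Conversely,
if `((1,s_n;0,1), (-s_n r_n, 0))` converges while `r_n → ∞`, then `s_n = (s_n r_n) / r_n → 0`,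
so the limit has linear part `I` and translation part on the first axis.
-/

open Filter Topology

noncomputable section

/-- `SL(2,ℝ)`. -/
abbrev SL2 := Matrix.SpecialLinearGroup (Fin 2) ℝ

/-- The topology on `SL(2,ℝ)` induced from the space of `2×2` real matrices. -/
instance : TopologicalSpace SL2 :=
  TopologicalSpace.induced ((↑) : SL2 → Matrix (Fin 2) (Fin 2) ℝ) inferInstance

/-- The underlying type of the group `G = SL(2,ℝ) ⋉ ℝ²`, with the product topology. -/
abbrev GG := SL2 × (Fin 2 → ℝ)

/-- Multiplication in `G`: `(g,v)(g',v') = (gg', v + g·v')`. -/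
def gmul (x y : GG) : GG := (x.1 * y.1, x.2 + (x.1 : Matrix (Fin 2) (Fin 2) ℝ).mulVec y.2)

/-- The identity element of `G`. -/
def gone : GG := (1, 0)

/-- Inversion in `G`. -/
def ginv (x : GG) : GG := (x.1⁻¹, -((x.1⁻¹ : SL2) : Matrix (Fin 2) (Fin 2) ℝ).mulVec x.2)

/-- The conjugate `x H x⁻¹` of a subset `H ⊆ G` by `x ∈ G`. -/
def conjSet (x : GG) (H : Set GG) : Set GG := (fun h => gmul (gmul x h) (ginv x)) '' H

/-- `H` is a closed subgroup of `G`. -/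
def IsClosedSubgroup (H : Set GG) : Prop :=
  IsClosed H ∧ gone ∈ H ∧ (∀ a ∈ H, ∀ b ∈ H, gmul a b ∈ H) ∧ (∀ a ∈ H, ginv a ∈ H)

/-- Chabauty convergence of a sequence of subsets of a topological space:
(i) every point of the limit is a limit of a sequence of points of the `S n`;
(ii) every limit of a subsequence of points of the `S n` lies in the limit set. -/
def ChabautyTendsto {X : Type*} [TopologicalSpace X] (S : ℕ → Set X) (T : Set X) : Prop :=
  (∀ h ∈ T, ∃ u : ℕ → X, (∀ n, u n ∈ S n) ∧ Tendsto u atTop (𝓝 h)) ∧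
  (∀ k : ℕ → ℕ, StrictMono k → ∀ u : ℕ → X, (∀ n, u n ∈ S (k n)) →
    ∀ x : X, Tendsto u atTop (𝓝 x) → x ∈ T)

/-- The Levi subgroup `L = SL(2,ℝ) × {0}`. -/
def Lset : Set GG := {x | x.2 = 0}

/-- The subgroup `N⁺ ⋉ ℝ² = {((1,s;0,1), v) : s ∈ ℝ, v ∈ ℝ²}`. -/
def NplusR2 : Set GG := {x | ∃ s : ℝ, (x.1 : Matrix (Fin 2) (Fin 2) ℝ) = !![1, s; 0, 1]}

/-- The maximal compact subgroup `K = SO(2,ℝ) × {0}`. -/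
def Kset : Set GG :=
  {x | ∃ θ : ℝ, (x.1 : Matrix (Fin 2) (Fin 2) ℝ) =
      !![Real.cos θ, Real.sin θ; -Real.sin θ, Real.cos θ] ∧ x.2 = 0}

/-- `V_c = {(I,(t,ct)) : t ∈ ℝ}`. -/
def Vc (c : ℝ) : Set GG := {x | ∃ t : ℝ, x.1 = 1 ∧ x.2 = ![t, c * t]}

/-- `V_∞ = {(I,(0,t)) : t ∈ ℝ}`. -/
def Vinf : Set GG := {x | ∃ t : ℝ, x.1 = 1 ∧ x.2 = ![0, t]}

/-- `Ñ⁺ = {(±(1,s;0,1), 0) : s ∈ ℝ}`. -/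
def Ntilde : Set GG :=
  {x | (∃ s : ℝ, (x.1 : Matrix (Fin 2) (Fin 2) ℝ) = !![1, s; 0, 1] ∨
      (x.1 : Matrix (Fin 2) (Fin 2) ℝ) = -!![1, s; 0, 1]) ∧ x.2 = 0}

/-- The diagonal subgroup `A = {(diag(a,1/a), 0) : a > 0}`. -/
def Aset : Set GG :=
  {x | ∃ a : ℝ, 0 < a ∧ (x.1 : Matrix (Fin 2) (Fin 2) ℝ) = !![a, 0; 0, a⁻¹] ∧ x.2 = 0}

/-- `V_{(a,b,c)} = {((1,at;0,1), (ct + abt²/2, bt)) : t ∈ ℝ}`. -/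
def Vabc (a b c : ℝ) : Set GG :=
  {x | ∃ t : ℝ, (x.1 : Matrix (Fin 2) (Fin 2) ℝ) = !![1, a * t; 0, 1] ∧
      x.2 = ![c * t + a * b * t ^ 2 / 2, b * t]}

/-- The upper triangular Borel subgroup `B` of `SL(2,ℝ)`, inside `G`. -/
def Bset : Set GG :=
  {x | ∃ a s : ℝ, a ≠ 0 ∧ (x.1 : Matrix (Fin 2) (Fin 2) ℝ) = !![a, s; 0, a⁻¹] ∧ x.2 = 0}

/-- `W = {((1,s;0,1), (t,0)) : s, t ∈ ℝ} = N⁺ ⋉ {(t,0)}`. -/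
def Wset : Set GG :=
  {x | ∃ s t : ℝ, (x.1 : Matrix (Fin 2) (Fin 2) ℝ) = !![1, s; 0, 1] ∧ x.2 = ![t, 0]}

/-- The Borel subgroup `P = B ⋉ ℝ²` of `G`. -/
def Pset : Set GG :=
  {x | ∃ a s : ℝ, a ≠ 0 ∧ (x.1 : Matrix (Fin 2) (Fin 2) ℝ) = !![a, s; 0, a⁻¹]}

/-- The translation subgroup `ℝ² = {(I,v) : v ∈ ℝ²}`. -/
def R2set : Set GG := {x | x.1 = 1}

/-- The unipotent subgroup `N⁺ = {((1,s;0,1), 0) : s ∈ ℝ}`. -/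
def Nplus : Set GG := {x | ∃ s : ℝ, (x.1 : Matrix (Fin 2) (Fin 2) ℝ) = !![1, s; 0, 1] ∧ x.2 = 0}

/-- `V₀ = {(I,(t,0)) : t ∈ ℝ}`. -/
def V0 : Set GG := {x | ∃ t : ℝ, x.1 = 1 ∧ x.2 = ![t, 0]}

def upperUnipotent (s : ℝ) : SL2 :=
  ⟨!![1, s; 0, 1], by simp [Matrix.det_fin_two_of]⟩

open Matrix

lemma coe_upperUnipotent (s : ℝ) :
    ((upperUnipotent s : SL2) : Matrix (Fin 2) (Fin 2) ℝ) = !![1, s; 0, 1] := rfl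

lemma upperUnipotent_zero : upperUnipotent 0 = 1 := by
  ext i j
  fin_cases i <;> fin_cases j <;> rfl

lemma isEmbedding_coe_SL2 : IsEmbedding ((↑) : SL2 → Matrix (Fin 2) (Fin 2) ℝ) :=
  ⟨.induced _, Subtype.val_injective⟩

instance : T2Space SL2 := isEmbedding_coe_SL2.t2Space

lemma continuous_upperUnipotent : Continuous upperUnipotent := by
  refine isEmbedding_coe_SL2.continuous_iff.2 (continuous_matrix fun i j => ?_)
  fin_cases i <;> fin_cases j <;> simp <;> fun_prop

lemma mem_V0_iff {x : GG} : x ∈ V0 ↔ x.1 = 1 ∧ x.2 1 = 0 := by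
  refine ⟨fun ⟨t, h1, h2⟩ => ⟨h1, by simp [h2]⟩, fun ⟨h1, h2⟩ => ⟨x.2 0, h1, ?_⟩⟩
  ext i
  fin_cases i <;> simp [h2]

lemma conj_translation (v : Fin 2 → ℝ) (x : GG) :
    gmul (gmul ((1 : SL2), v) x) (ginv ((1 : SL2), v)) = (x.1, v + x.2 - x.1 *ᵥ v) := by
  ext1
  · simp [gmul, ginv]
  · simp [gmul, ginv, mulVec_neg, sub_eq_add_neg, add_assoc]

lemma Nplus_eq_range : Nplus = Set.range fun s => (upperUnipotent s, (0 : Fin 2 → ℝ)) := by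
  ext ⟨g, v⟩
  simp only [Nplus, Set.mem_ofPred_eq, Set.mem_range, Prod.mk.injEq, eq_comm (b := v)]
  exact exists_congr fun s => and_congr_left' 
    ⟨fun h => Subtype.ext h.symm, fun h => by rw [← h]; rfl⟩

lemma conjSet_Nplus (r : ℝ) :
    conjSet ((1 : SL2), ![0, r]) Nplus = Set.range fun s => (upperUnipotent s, ![-(s * r), 0]) := by
  rw [conjSet, Nplus_eq_range, ← Set.range_comp]
  congr 1
  ext s : 1
  simp only [Function.comp_apply, conj_translation, Prod.mk.injEq, true_and]
  ext i
  fin_cases i <;> simp [coe_upperUnipotent, mul_comm]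

lemma isClosedSubgroup_V0 : IsClosedSubgroup V0 := by
  refine ⟨?_, mem_V0_iff.2 ⟨rfl, rfl⟩, fun a ha b hb => ?_, fun a ha => ?_⟩
  · have : V0 = {x : GG | x.1 = 1} ∩ {x | x.2 1 = 0} := Set.ext fun _ => mem_V0_iff
    rw [this]
    exact (isClosed_eq continuous_fst continuous_const).inter
      (isClosed_eq ((continuous_apply 1).comp continuous_snd) continuous_const)
  · obtain ⟨ha1, ha2⟩ := mem_V0_iff.1 ha
    obtain ⟨hb1, hb2⟩ := mem_V0_iff.1 hb
    exact mem_V0_iff.2 ⟨by simp [gmul, ha1, hb1], by simp [gmul, ha1, ha2, hb2]⟩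
  · obtain ⟨ha1, ha2⟩ := mem_V0_iff.1 ha
    exact mem_V0_iff.2 ⟨by simp [ginv, ha1], by simp [ginv, ha1, ha2]⟩

lemma exists_tendsto_mem_conjSet_Nplus {r : ℕ → ℝ} (hr : Tendsto r atTop atTop) {h : GG}
    (hh : h ∈ V0) : ∃ u : ℕ → GG, (∀ n, u n ∈ conjSet ((1 : SL2), ![0, r n]) Nplus) ∧
      Tendsto u atTop (𝓝 h) := by
  obtain ⟨t, h1, h2⟩ := hh
  refine ⟨fun n => (upperUnipotent (-t / r n), ![-(-t / r n * r n), 0]),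
    fun n => conjSet_Nplus (r n) ▸ ⟨_, rfl⟩, ?_⟩
  rw [← Prod.mk.eta (p := h), h1, h2, ← upperUnipotent_zero]
  refine ((continuous_upperUnipotent.tendsto 0).comp
    (tendsto_const_nhds.div_atTop hr)).prodMk_nhds (tendsto_const_nhds.congr' ?_)
  filter_upwards [hr.eventually_ne_atTop 0] with n hn
  rw [div_mul_cancel₀ _ hn, neg_neg]

lemma mem_V0_of_tendsto_of_mem_conjSet_Nplus {r : ℕ → ℝ} (hr : Tendsto r atTop atTop)
    {u : ℕ → GG} (hu : ∀ n, u n ∈ conjSet ((1 : SL2), ![0, r n]) Nplus) {x : GG}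
    (hx : Tendsto u atTop (𝓝 x)) : x ∈ V0 := by
  choose s hs using fun n => conjSet_Nplus (r n) ▸ hu n
  have hx2 := (continuous_snd.tendsto x).comp hx
  have hsr : Tendsto (fun n => -(s n * r n)) atTop (𝓝 (x.2 0)) :=
    ((continuous_apply 0).tendsto _ |>.comp hx2).congr fun n => by simp [← hs n]
  have hs0 : Tendsto s atTop (𝓝 0) := by
    refine (hsr.neg.div_atTop hr).congr' ?_
    filter_upwards [hr.eventually_ne_atTop 0] with n hn
    rw [neg_neg, mul_div_cancel_right₀ _ hn]
  refine mem_V0_iff.2 ⟨tendsto_nhds_unique ((continuous_fst.tendsto x).comp hx) ?_, ?_⟩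
  · exact upperUnipotent_zero ▸ ((continuous_upperUnipotent.tendsto 0).comp hs0).congr
      fun n => by simp [← hs n]
  · exact tendsto_nhds_unique ((continuous_apply 1).tendsto _ |>.comp hx2)
      (tendsto_const_nhds.congr fun n => by simp [← hs n])

/-- With `x_n = (I,(0,n))`, the conjugates `x_n N⁺ x_n⁻¹` converge in the Chabauty sense to
the closed subgroup `V₀`. -/
theorem stmt_18 :
    ChabautyTendsto (fun n => conjSet ((1 : SL2), ![0, (n : ℝ)]) Nplus) V0 ∧
      IsClosedSubgroup V0 :=
  ⟨⟨fun _ hh => exists_tendsto_mem_conjSet_Nplus tendsto_natCast_atTop_atTop hh,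
    fun _ hk _ hu _ hx => mem_V0_of_tendsto_of_mem_conjSet_Nplus
      (tendsto_natCast_atTop_atTop.comp hk.tendsto_atTop) hu hx⟩,
    isClosedSubgroup_V0⟩

end
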